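/- The chromatic number is stable under 2-switch: for every simple graph G on a finite vertex set V and every graph G' obtained from G by a 2-switch, |χ(G') − χ(G)| ≤ 1. -/

import Mathlib

/-!
Every edge of the 2-switch `G'` at `(a,b;c,d)` that avoids `{a, b}` is an edge of `G`, and
`{a, b}` is independent in `G'`; so a proper coloring of `G` becomes one of `G'` after giving
`a` and `b` a single fresh color. Symmetrically, every edge of `G` avoiding `{a, c}` survives
in `G'`, and `{a, c}` is independent in `G`.
-/

open SimpleGraph

/-- Four pairwise distinct vertices `a,b,c,d` with `ab, cd ∈ E(G)` and `ac, bd ∉ E(G)`: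
the condition under which the 2-switch of `G` at `(a,b;c,d)` is performed. -/
def Switchable {V : Type*} (G : SimpleGraph V) (a b c d : V) : Prop :=
  a ≠ b ∧ a ≠ c ∧ a ≠ d ∧ b ≠ c ∧ b ≠ d ∧ c ≠ d ∧
    G.Adj a b ∧ G.Adj c d ∧ ¬ G.Adj a c ∧ ¬ G.Adj b d

/-- The 2-switch of `G` at `(a,b;c,d)`: the graph on `V` with edge set
`(E(G) \ {ab, cd}) ∪ {ac, bd}`. -/
def twoSwitch {V : Type*} (G : SimpleGraph V) (a b c d : V) : SimpleGraph V :=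
  SimpleGraph.fromEdgeSet ((G.edgeSet \ {s(a, b), s(c, d)}) ∪ {s(a, c), s(b, d)})

/-- `G'` is obtained from `G` by a 2-switch. -/
def ObtainedByTwoSwitch {V : Type*} (G G' : SimpleGraph V) : Prop :=
  ∃ a b c d : V, Switchable G a b c d ∧ G' = twoSwitch G a b c d

namespace SimpleGraph

variable {V : Type*} {G H : SimpleGraph V}

theorem Colorable.succ_of_isIndepSet {s : Set V} {n : ℕ} (hG : G.Colorable n)
    (hs : H.IsIndepSet s) (hHG : ∀ ⦃u v⦄, H.Adj u v → u ∉ s → v ∉ s → G.Adj u v) :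
    H.Colorable (n + 1) := by
  classical
  obtain ⟨C⟩ := hG
  let C' : H.Coloring (Option (Fin n)) :=
    Coloring.mk (fun v => if v ∈ s then none else some (C v)) fun {u v} huv => by
      by_cases hu : u ∈ s <;> by_cases hv : v ∈ s <;> simp only [hu, hv, if_true, if_false]
      · exact (hs hu hv huv.ne huv).elim
      · exact Option.some_ne_none _ |>.symm
      · exact Option.some_ne_none _
      · exact fun h => C.valid (hHG huv hu hv) (Option.some_injective _ h)
  simpa using C'.colorable

theorem chromaticNumber_le_add_one_of_forall_colorable
    (h : ∀ n, G.Colorable n → H.Colorable (n + 1)) :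
    H.chromaticNumber ≤ G.chromaticNumber + 1 := by
  obtain hG | hG := eq_or_ne G.chromaticNumber ⊤
  · simp [hG]
  obtain ⟨n, hn⟩ := ENat.ne_top_iff_exists.1 hG
  have hGn : G.Colorable n := chromaticNumber_le_iff_colorable.1 hn.ge
  simpa [← hn] using (h n hGn).chromaticNumber_le

end SimpleGraph

section TwoSwitch

variable {V : Type*} {G : SimpleGraph V} {a b c d : V}

theorem twoSwitch_adj {u v : V} :
    (twoSwitch G a b c d).Adj u v ↔
      ((G.Adj u v ∧ s(u, v) ≠ s(a, b) ∧ s(u, v) ≠ s(c, d)) ∨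
        s(u, v) = s(a, c) ∨ s(u, v) = s(b, d)) ∧ u ≠ v := by
  simp only [twoSwitch, fromEdgeSet_adj, Set.mem_union, Set.mem_sdiff, Set.mem_insert_iff,
    Set.mem_singleton_iff, mem_edgeSet, not_or]

theorem Switchable.colorable_twoSwitch {n : ℕ} (h : Switchable G a b c d)
    (hG : G.Colorable n) : (twoSwitch G a b c d).Colorable (n + 1) := by
  obtain ⟨hab, hac, had, hbc, hbd, hcd, -⟩ := h
  refine hG.succ_of_isIndepSet (s := {a, b}) ?_ ?_
  · intro u hu v hv huv
    simp only [Set.mem_insert_iff, Set.mem_singleton_iff] at hu hv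
    simp only [twoSwitch_adj, Sym2.eq_iff]
    aesop
  · intro u v huv hu hv
    simp only [twoSwitch_adj, Sym2.eq_iff, Set.mem_insert_iff, Set.mem_singleton_iff] at huv hu hv
    aesop

theorem Switchable.colorable_of_colorable_twoSwitch {n : ℕ} (h : Switchable G a b c d)
    (hG' : (twoSwitch G a b c d).Colorable n) : G.Colorable (n + 1) := by
  obtain ⟨hab, hac, had, hbc, hbd, hcd, -, -, hnac, hnbd⟩ := h
  refine hG'.succ_of_isIndepSet (s := {a, c}) ?_ ?_
  · intro u hu v hv huv
    simp only [Set.mem_insert_iff, Set.mem_singleton_iff] at hu hv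
    aesop (add simp adj_comm)
  · intro u v huv hu hv
    simp only [Set.mem_insert_iff, Set.mem_singleton_iff] at hu hv
    simp only [twoSwitch_adj, Sym2.eq_iff]
    aesop

end TwoSwitch

theorem stmt_18_general {V : Type*} (G G' : SimpleGraph V)
    (h : ObtainedByTwoSwitch G G') :
    G'.chromaticNumber ≤ G.chromaticNumber + 1 ∧
    G.chromaticNumber ≤ G'.chromaticNumber + 1 := by
  obtain ⟨a, b, c, d, hs, rfl⟩ := h
  exact ⟨chromaticNumber_le_add_one_of_forall_colorable fun _ => hs.colorable_twoSwitch,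
    chromaticNumber_le_add_one_of_forall_colorable fun _ => hs.colorable_of_colorable_twoSwitch⟩

/-- the chromatic number is stable under 2-switch, i.e.
`|χ(G') − χ(G)| ≤ 1`, stated by the two inequalities `χ(G') ≤ χ(G) + 1` and
`χ(G) ≤ χ(G') + 1`. -/
theorem stmt_18 {V : Type*} [Fintype V] (G G' : SimpleGraph V)
    (h : ObtainedByTwoSwitch G G') :
    G'.chromaticNumber ≤ G.chromaticNumber + 1 ∧
    G.chromaticNumber ≤ G'.chromaticNumber + 1 :=
  stmt_18_general G G' h
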